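/- For λ ∈ ℝ^d and α = 2, ∫_{ℝ^d} e^{λ·x} G_s(x) dx = E_β(ν|λ|² s^β) = ∑_{k≥0} ν^k |λ|^{2k} s^{βk}/Γ(1+βk), where G_s(x) = ∫_0^∞ (4πνu)^{-d/2} e^{-|x|²/(4νu)} f_{E_s}(u) du. -/

import Mathlib

open MeasureTheory Real Set
open scoped RealInnerProductSpace
open Filter

lemma rexp_tsum (x : ℝ) : Real.exp x = ∑' n : ℕ, x ^ n / (n.factorial : ℝ) := by
  rw [Real.exp_eq_exp_ℝ, NormedSpace.exp_eq_tsum_div]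

lemma gamma_step {β t : ℝ} (hβ0 : 0 < β) (hβ1 : β < 1) (ht : 1 ≤ t) :
    Real.Gamma t * t ^ β ≤ 2 * Real.Gamma (t + β) := by
  have ht0 : (0:ℝ) < t := lt_of_lt_of_le one_pos ht
  have htβ : (0:ℝ) < t + β := by linarith
  have hΓ : 0 < Real.Gamma (t + β) := Real.Gamma_pos_of_pos htβ
  have key : t * Real.Gamma t ≤ Real.Gamma (t + β) * (t + β) ^ (1 - β) := by
    have h := Real.Gamma_mul_add_mul_le_rpow_Gamma_mul_rpow_Gamma
      (s := t + β) (t := t + 1 + β) (a := β) (b := 1 - β) htβ (by linarith) hβ0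
      (by linarith) (by ring)
    rw [show β * (t + β) + (1 - β) * (t + 1 + β) = t + 1 by ring] at h
    rw [show t + 1 + β = (t + β) + 1 by ring, Real.Gamma_add_one htβ.ne'] at h
    rw [Real.Gamma_add_one ht0.ne'] at h
    calc t * Real.Gamma t ≤ Real.Gamma (t + β) ^ β * ((t + β) * Real.Gamma (t + β)) ^ (1 - β) := h
      _ = Real.Gamma (t + β) * (t + β) ^ (1 - β) := by
          rw [Real.mul_rpow htβ.le hΓ.le]
          rw [show Real.Gamma (t+β) ^ β * ((t + β) ^ (1-β) * Real.Gamma (t+β) ^ (1-β))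
              = (Real.Gamma (t+β) ^ β * Real.Gamma (t+β) ^ (1-β)) * (t + β) ^ (1-β) by ring]
          rw [← Real.rpow_add hΓ, show β + (1 - β) = (1:ℝ) by ring, Real.rpow_one]
  have h2 : (t + β) ^ (1 - β) ≤ 2 * t ^ (1 - β) := by
    calc (t + β) ^ (1 - β) ≤ (2 * t) ^ (1 - β) :=
          Real.rpow_le_rpow htβ.le (by linarith) (by linarith)
      _ = 2 ^ (1 - β) * t ^ (1 - β) := Real.mul_rpow (by norm_num) ht0.le
      _ ≤ 2 * t ^ (1 - β) := by
          have : (2:ℝ) ^ (1 - β) ≤ 2 ^ (1:ℝ) :=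
            Real.rpow_le_rpow_of_exponent_le one_le_two (by linarith)
          rw [Real.rpow_one] at this
          exact mul_le_mul_of_nonneg_right this (Real.rpow_nonneg ht0.le _)
  have h3 : t * Real.Gamma t ≤ 2 * Real.Gamma (t + β) * t ^ (1 - β) := by
    calc t * Real.Gamma t ≤ Real.Gamma (t + β) * (2 * t ^ (1 - β)) := by
          refine key.trans (mul_le_mul_of_nonneg_left h2 hΓ.le)
      _ = 2 * Real.Gamma (t + β) * t ^ (1 - β) := by ring
  have h4 := mul_le_mul_of_nonneg_right h3 (Real.rpow_nonneg ht0.le (β - 1))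
  have e1 : t * Real.Gamma t * t ^ (β - 1) = Real.Gamma t * t ^ β := by
    rw [show t * Real.Gamma t * t ^ (β-1) = Real.Gamma t * (t ^ (1:ℝ) * t ^ (β-1)) by
        rw [Real.rpow_one]; ring]
    rw [← Real.rpow_add ht0, show (1:ℝ) + (β - 1) = β by ring]
  have e2 : 2 * Real.Gamma (t + β) * t ^ (1 - β) * t ^ (β - 1) = 2 * Real.Gamma (t + β) := by
    rw [mul_assoc, ← Real.rpow_add ht0, show (1 - β) + (β - 1) = (0:ℝ) by ring, Real.rpow_zero,
      mul_one]
  rw [e1, e2] at h4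
  exact h4

lemma summable_ml {β : ℝ} (hβ0 : 0 < β) (hβ1 : β < 1) {y : ℝ} (hy : 0 ≤ y) :
    Summable (fun k : ℕ => y ^ k / Real.Gamma (1 + β * k)) := by
  refine summable_of_ratio_norm_eventually_le (r := 1/2) (by norm_num) ?_
  have hT : Tendsto (fun k : ℕ => (1 + β * k) ^ β) atTop atTop := by
    apply (tendsto_rpow_atTop hβ0).comp
    apply tendsto_atTop_add_const_left
    exact (tendsto_natCast_atTop_atTop (R := ℝ)).const_mul_atTop hβ0
  filter_upwards [hT.eventually_ge_atTop (4 * y)] with k hk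
  set t : ℝ := 1 + β * k with htdef
  have ht1 : (1:ℝ) ≤ t := by
    have : (0:ℝ) ≤ β * k := by positivity
    simp only [htdef]; linarith
  have ht0 : (0:ℝ) < t := lt_of_lt_of_le one_pos ht1
  have htβ : (0:ℝ) < t + β := by linarith
  have hΓt : 0 < Real.Gamma t := Real.Gamma_pos_of_pos ht0
  have hΓtβ : 0 < Real.Gamma (t + β) := Real.Gamma_pos_of_pos htβ
  have hstep := gamma_step hβ0 hβ1 ht1
  have harg : 1 + β * ((k : ℝ) + 1) = t + β := by simp only [htdef]; ring
  have htp : (0:ℝ) < t ^ β := Real.rpow_pos_of_pos ht0 _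
  rw [Real.norm_of_nonneg (by positivity), Real.norm_of_nonneg (by positivity)]
  push_cast
  rw [harg]
  have key : y ^ (k+1) / Real.Gamma (t + β) ≤ (2 * y / t ^ β) * (y ^ k / Real.Gamma t) := by
    have hhalf : Real.Gamma t * t ^ β / 2 ≤ Real.Gamma (t + β) := by linarith
    calc y ^ (k+1) / Real.Gamma (t + β) ≤ y ^ (k+1) / (Real.Gamma t * t ^ β / 2) := by
          apply div_le_div_of_nonneg_left (by positivity) (by positivity) hhalf
      _ = (2 * y / t ^ β) * (y ^ k / Real.Gamma t) := by
          field_simp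
          ring
  refine key.trans ?_
  have hle : 2 * y / t ^ β ≤ 1 / 2 := by
    rw [div_le_div_iff₀ htp (by norm_num)]
    nlinarith [hk]
  exact mul_le_mul_of_nonneg_right hle (by positivity)

lemma gauss_integrable {d : ℕ} {b : ℝ} (hb : 0 < b) (w : EuclideanSpace ℝ (Fin d)) :
    Integrable (fun v : EuclideanSpace ℝ (Fin d) => Real.exp (-b * ‖v‖ ^ 2 + ⟪w, v⟫)) := by
  have hb' : 0 < ((b : ℂ)).re := by simpa using hb
  have h := (GaussianFourier.integrable_cexp_neg_mul_sq_norm_add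
    (V := EuclideanSpace ℝ (Fin d)) hb' 1 w).re
  refine h.congr (Eventually.of_forall fun v => ?_)
  have : (-(b:ℂ) * (‖v‖:ℂ) ^ 2 + 1 * (⟪w, v⟫ : ℝ)) = ((-b * ‖v‖ ^ 2 + ⟪w, v⟫ : ℝ) : ℂ) := by
    push_cast; ring
  show RCLike.re (Complex.exp _) = _
  rw [this, ← Complex.ofReal_exp]
  exact Complex.ofReal_re _

lemma gauss_integral {d : ℕ} {b : ℝ} (hb : 0 < b) (w : EuclideanSpace ℝ (Fin d)) :
    (∫ v : EuclideanSpace ℝ (Fin d), Real.exp (-b * ‖v‖ ^ 2 + ⟪w, v⟫))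
      = (π / b) ^ ((d : ℝ) / 2) * Real.exp (‖w‖ ^ 2 / (4 * b)) := by
  have hb' : 0 < ((b : ℂ)).re := by simpa using hb
  have h := GaussianFourier.integral_cexp_neg_mul_sq_norm_add
    (V := EuclideanSpace ℝ (Fin d)) hb' 1 w
  have hπb : (0:ℝ) < π / b := div_pos pi_pos hb
  rw [← Complex.ofReal_inj]
  calc ((∫ v : EuclideanSpace ℝ (Fin d), Real.exp (-b * ‖v‖ ^ 2 + ⟪w, v⟫) : ℝ) : ℂ)
      = ∫ v : EuclideanSpace ℝ (Fin d),
          ((Real.exp (-b * ‖v‖ ^ 2 + ⟪w, v⟫) : ℝ) : ℂ) := (integral_ofReal).symm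
    _ = ∫ v : EuclideanSpace ℝ (Fin d),
          Complex.exp (-(b:ℂ) * (‖v‖:ℂ) ^ 2 + 1 * (⟪w, v⟫ : ℝ)) := by
        refine integral_congr_ae (Eventually.of_forall fun v => ?_)
        have : (-(b:ℂ) * (‖v‖:ℂ) ^ 2 + 1 * (⟪w, v⟫ : ℝ))
            = ((-b * ‖v‖ ^ 2 + ⟪w, v⟫ : ℝ) : ℂ) := by push_cast; ring
        simp only [this, Complex.ofReal_exp]
    _ = ((π:ℂ) / b) ^ ((Module.finrank ℝ (EuclideanSpace ℝ (Fin d)) : ℂ) / 2)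
          * Complex.exp ((1:ℂ) ^ 2 * (‖w‖:ℂ) ^ 2 / (4 * b)) := h
    _ = (((π / b) ^ ((d : ℝ) / 2) * Real.exp (‖w‖ ^ 2 / (4 * b)) : ℝ) : ℂ) := by
        rw [finrank_euclideanSpace_fin, Complex.ofReal_mul, Complex.ofReal_exp,
          Complex.ofReal_cpow hπb.le]
        push_cast
        norm_num

lemma gauss_moment {d : ℕ} {ν u : ℝ} (hν : 0 < ν) (hu : 0 < u)
    (lam : EuclideanSpace ℝ (Fin d)) (a : ℝ) :
    (∫ x : EuclideanSpace ℝ (Fin d), Real.exp (⟪lam, x⟫) *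
        ((4 * π * ν * u) ^ (-(d : ℝ) / 2) * Real.exp (-‖x‖ ^ 2 / (4 * ν * u)) * a))
      = Real.exp (ν * ‖lam‖ ^ 2 * u) * a ∧
    Integrable (fun x : EuclideanSpace ℝ (Fin d) => Real.exp (⟪lam, x⟫) *
        ((4 * π * ν * u) ^ (-(d : ℝ) / 2) * Real.exp (-‖x‖ ^ 2 / (4 * ν * u)) * a)) := by
  set b : ℝ := (4 * ν * u)⁻¹ with hbdef
  have hb : 0 < b := by positivity
  have hbase : (0:ℝ) < 4 * π * ν * u := by positivity
  have hrw : ∀ x : EuclideanSpace ℝ (Fin d),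
      Real.exp (⟪lam, x⟫) *
        ((4 * π * ν * u) ^ (-(d : ℝ) / 2) * Real.exp (-‖x‖ ^ 2 / (4 * ν * u)) * a)
      = ((4 * π * ν * u) ^ (-(d : ℝ) / 2) * a) * Real.exp (-b * ‖x‖ ^ 2 + ⟪lam, x⟫) := by
    intro x
    rw [Real.exp_add]
    have h1 : -b * ‖x‖ ^ 2 = -‖x‖ ^ 2 / (4 * ν * u) := by
      rw [hbdef]; field_simp
    rw [h1]; ring
  have hπb : π / b = 4 * π * ν * u := by
    rw [hbdef]; field_simp
  have h4b : ‖lam‖ ^ 2 / (4 * b) = ν * ‖lam‖ ^ 2 * u := by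
    rw [hbdef]; field_simp
  constructor
  · calc (∫ x : EuclideanSpace ℝ (Fin d), Real.exp (⟪lam, x⟫) *
        ((4 * π * ν * u) ^ (-(d : ℝ) / 2) * Real.exp (-‖x‖ ^ 2 / (4 * ν * u)) * a))
        = ∫ x : EuclideanSpace ℝ (Fin d),
            ((4 * π * ν * u) ^ (-(d : ℝ) / 2) * a) * Real.exp (-b * ‖x‖ ^ 2 + ⟪lam, x⟫) := by
          exact integral_congr_ae (Eventually.of_forall fun x => hrw x)
      _ = ((4 * π * ν * u) ^ (-(d : ℝ) / 2) * a) *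
            ∫ x : EuclideanSpace ℝ (Fin d), Real.exp (-b * ‖x‖ ^ 2 + ⟪lam, x⟫) :=
          integral_const_mul _ _
      _ = ((4 * π * ν * u) ^ (-(d : ℝ) / 2) * a) *
            ((4 * π * ν * u) ^ ((d : ℝ) / 2) * Real.exp (ν * ‖lam‖ ^ 2 * u)) := by
          rw [gauss_integral hb lam, hπb, h4b]
      _ = ((4 * π * ν * u) ^ (-(d : ℝ) / 2) * (4 * π * ν * u) ^ ((d : ℝ) / 2)) *
            (Real.exp (ν * ‖lam‖ ^ 2 * u) * a) := by ring
      _ = Real.exp (ν * ‖lam‖ ^ 2 * u) * a := by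
          rw [← Real.rpow_add hbase, show -(d:ℝ)/2 + (d:ℝ)/2 = 0 by ring, Real.rpow_zero, one_mul]
  · refine ((gauss_integrable hb lam).const_mul ((4 * π * ν * u) ^ (-(d : ℝ) / 2) * a)).congr
      (Eventually.of_forall fun x => (hrw x).symm)

/-- The Mittag-Leffler function `E_β(x) = ∑_{k≥0} x^k / Γ(1+βk)`. -/
noncomputable def mittagLeffler (β x : ℝ) : ℝ := ∑' k : ℕ, x ^ k / Real.Gamma (1 + β * k)

theorem integral_exp_mul_subordinated_gaussian (d : ℕ) (hd : 1 ≤ d) (ν β s : ℝ)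
    (hν : 0 < ν) (hβ0 : 0 < β) (hβ1 : β < 1) (hs : 0 < s)
    (f : ℝ → ℝ) (hf : ∀ u, 0 ≤ f u)
    (hmom : ∀ k : ℕ, ∫ u in Ioi (0 : ℝ), u ^ k * f u
        = Real.Gamma (1 + (k : ℝ)) * s ^ (β * (k : ℝ)) / Real.Gamma (1 + β * (k : ℝ)))
    (G : EuclideanSpace ℝ (Fin d) → ℝ)
    (hG : ∀ x, G x = ∫ u in Ioi (0 : ℝ),
        (4 * π * ν * u) ^ (-(d : ℝ) / 2) * Real.exp (-‖x‖ ^ 2 / (4 * ν * u)) * f u)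
    (lam : EuclideanSpace ℝ (Fin d)) :
    (∫ x, Real.exp (⟪lam, x⟫) * G x) = mittagLeffler β (ν * ‖lam‖ ^ 2 * s ^ β) ∧
      mittagLeffler β (ν * ‖lam‖ ^ 2 * s ^ β)
        = ∑' k : ℕ, ν ^ k * ‖lam‖ ^ (2 * k) * s ^ (β * (k : ℝ)) / Real.Gamma (1 + β * k) := by
  have hsecond : mittagLeffler β (ν * ‖lam‖ ^ 2 * s ^ β)
      = ∑' k : ℕ, ν ^ k * ‖lam‖ ^ (2 * k) * s ^ (β * (k : ℝ)) / Real.Gamma (1 + β * k) := by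
    rw [mittagLeffler]
    refine tsum_congr fun k => ?_
    rw [mul_pow, mul_pow, pow_mul, ← Real.rpow_natCast (s ^ β) k, ← Real.rpow_mul hs.le]
  refine ⟨?_, hsecond⟩
  -- Notation
  set c : ℝ := ν * ‖lam‖ ^ 2 with hcdef
  have hc : 0 ≤ c := by positivity
  set μ : Measure ℝ := volume.restrict (Ioi (0:ℝ)) with hμdef
  -- positivity of the moments
  have hRHSpos : ∀ k : ℕ, 0 < Real.Gamma (1 + (k : ℝ)) * s ^ (β * (k : ℝ))
      / Real.Gamma (1 + β * (k : ℝ)) := by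
    intro k
    have h1 : 0 < Real.Gamma (1 + (k : ℝ)) := Real.Gamma_pos_of_pos (by positivity)
    have h2 : 0 < Real.Gamma (1 + β * (k : ℝ)) := Real.Gamma_pos_of_pos (by positivity)
    have h3 : 0 < s ^ (β * (k : ℝ)) := Real.rpow_pos_of_pos hs _
    positivity
  -- integrability of the moments
  have hint : ∀ k : ℕ, IntegrableOn (fun u => u ^ k * f u) (Ioi (0:ℝ)) volume := by
    intro k
    by_contra hcon
    have h0 := hmom k
    rw [integral_undef hcon] at h0
    exact (hRHSpos k).ne' h0.symm
  -- measurable nonnegative representative g of f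
  have hfa : AEStronglyMeasurable f μ := by
    have h := (hint 0).aestronglyMeasurable
    simpa using h
  set g : ℝ → ℝ := fun u => max (hfa.mk f u) 0 with hgdef
  have hgm : Measurable g := hfa.stronglyMeasurable_mk.measurable.max measurable_const
  have hg0 : ∀ u, 0 ≤ g u := fun u => le_max_right _ _
  have hfg : ∀ᵐ u ∂μ, f u = g u := by
    filter_upwards [hfa.ae_eq_mk] with u hu
    rw [hgdef]
    simp only [← hu]
    exact (max_eq_left (hf u)).symm
  have hmomg : ∀ k : ℕ, ∫ u in Ioi (0:ℝ), u ^ k * g u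
      = Real.Gamma (1 + (k : ℝ)) * s ^ (β * (k : ℝ)) / Real.Gamma (1 + β * (k : ℝ)) := by
    intro k
    rw [← hmom k]
    exact (integral_congr_ae (hfg.mono fun u hu => by simp only [hu])).symm
  have hintg : ∀ k : ℕ, IntegrableOn (fun u => u ^ k * g u) (Ioi (0:ℝ)) volume := fun k =>
    (hint k).congr (hfg.mono fun u hu => by simp only [hu])
  have hG' : ∀ x, G x = ∫ u in Ioi (0:ℝ),
      (4 * π * ν * u) ^ (-(d : ℝ) / 2) * Real.exp (-‖x‖ ^ 2 / (4 * ν * u)) * g u := by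
    intro x
    rw [hG x]
    exact integral_congr_ae (hfg.mono fun u hu => by simp only [hu])
  -- the kernel
  set F : EuclideanSpace ℝ (Fin d) → ℝ → ℝ := fun x u => Real.exp (⟪lam, x⟫) *
      ((4 * π * ν * u) ^ (-(d : ℝ) / 2) * Real.exp (-‖x‖ ^ 2 / (4 * ν * u)) * g u) with hFdef
  have hH0meas : Measurable (Function.uncurry fun x (u : ℝ) =>
      (4 * π * ν * u) ^ (-(d : ℝ) / 2) * Real.exp (-‖x‖ ^ 2 / (4 * ν * u)) *
        g u : EuclideanSpace ℝ (Fin d) × ℝ → ℝ) := by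
    apply Measurable.mul
    apply Measurable.mul
    · fun_prop
    · fun_prop
    · exact hgm.comp measurable_snd
  have hinnercont : Continuous fun x : EuclideanSpace ℝ (Fin d) => Real.exp (⟪lam, x⟫) :=
    Real.continuous_exp.comp (continuous_const.inner continuous_id)
  have hFmeas : Measurable (Function.uncurry F) := by
    exact (hinnercont.measurable.comp measurable_fst).mul hH0meas
  have hFnn : ∀ x u, 0 < u → 0 ≤ F x u := by
    intro x u hu
    have : (0:ℝ) < 4 * π * ν * u := by positivity
    have h2 := hg0 u
    rw [hFdef]
    positivity
  -- the target sum
  set T : ℝ := ∑' k : ℕ, (c * s ^ β) ^ k / Real.Gamma (1 + β * (k:ℝ)) with hTdef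
  have hsummable : Summable (fun k : ℕ => (c * s ^ β) ^ k / Real.Gamma (1 + β * (k:ℝ))) :=
    summable_ml hβ0 hβ1 (by positivity)
  have hTnn : 0 ≤ T := by
    rw [hTdef]
    refine tsum_nonneg fun k => ?_
    have := Real.Gamma_pos_of_pos (show (0:ℝ) < 1 + β * k by positivity)
    positivity
  -- Step A : the u-integral of exp(c u) g u
  have KeyA : (∫⁻ u in Ioi (0:ℝ), ENNReal.ofReal (Real.exp (c * u) * g u))
      = ENNReal.ofReal T := by
    have hptwise : ∀ u : ℝ, 0 < u → ENNReal.ofReal (Real.exp (c * u) * g u)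
        = ∑' k : ℕ, ENNReal.ofReal (c ^ k / (k.factorial : ℝ) * (u ^ k * g u)) := by
      intro u hu
      have hsum : Summable (fun k : ℕ => c ^ k / (k.factorial : ℝ) * (u ^ k * g u)) := by
        have := (Real.summable_pow_div_factorial (c * u)).mul_right (g u)
        refine this.congr fun k => ?_
        rw [mul_pow]; ring
      have heq : Real.exp (c * u) * g u
          = ∑' k : ℕ, c ^ k / (k.factorial : ℝ) * (u ^ k * g u) := by
        rw [rexp_tsum (c * u), ← tsum_mul_right]
        exact tsum_congr fun k => by rw [mul_pow]; ring
      rw [heq]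
      exact ENNReal.ofReal_tsum_of_nonneg
        (fun k => by have := hg0 u; positivity) hsum
    calc (∫⁻ u in Ioi (0:ℝ), ENNReal.ofReal (Real.exp (c * u) * g u))
        = ∫⁻ u in Ioi (0:ℝ),
            ∑' k : ℕ, ENNReal.ofReal (c ^ k / (k.factorial : ℝ) * (u ^ k * g u)) := by
          refine lintegral_congr_ae ?_
          rw [← hμdef]
          refine ((ae_restrict_iff' measurableSet_Ioi).mpr (ae_of_all _ ?_))
          exact fun u hu => hptwise u hu
      _ = ∑' k : ℕ, ∫⁻ u in Ioi (0:ℝ),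
            ENNReal.ofReal (c ^ k / (k.factorial : ℝ) * (u ^ k * g u)) := by
          refine lintegral_tsum fun k => ?_
          refine (ENNReal.measurable_ofReal.comp ?_).aemeasurable
          exact measurable_const.mul ((measurable_id.pow measurable_const).mul hgm)
      _ = ∑' k : ℕ, ENNReal.ofReal ((c * s ^ β) ^ k / Real.Gamma (1 + β * (k:ℝ))) := by
          refine tsum_congr fun k => ?_
          have hIk : Integrable (fun u => c ^ k / (k.factorial : ℝ) * (u ^ k * g u)) μ :=
            (hintg k).const_mul _
          have hnnk : 0 ≤ᵐ[μ] fun u => c ^ k / (k.factorial : ℝ) * (u ^ k * g u) := by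
            refine (ae_restrict_iff' measurableSet_Ioi).mpr (ae_of_all _ fun u hu => ?_)
            have h1 := hg0 u
            have h2 : (0:ℝ) < u := hu
            positivity
          rw [← ofReal_integral_eq_lintegral_ofReal hIk hnnk]
          congr 1
          rw [integral_const_mul, hmomg k]
          have hΓ : Real.Gamma (1 + (k:ℝ)) = (k.factorial : ℝ) := by
            rw [add_comm]
            exact_mod_cast Real.Gamma_nat_eq_factorial k
          rw [hΓ]
          have hfac : ((k.factorial : ℝ)) ≠ 0 := by positivity
          have hsk : s ^ (β * (k:ℝ)) = (s ^ β) ^ k := by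
            rw [Real.rpow_mul hs.le, Real.rpow_natCast]
          rw [hsk, mul_pow]
          field_simp
          ring
      _ = ENNReal.ofReal T := by
          rw [hTdef]
          refine (ENNReal.ofReal_tsum_of_nonneg (fun k => ?_) hsummable).symm
          have := Real.Gamma_pos_of_pos (show (0:ℝ) < 1 + β * k by positivity)
          positivity
  -- Step B : inner x-integral
  have KeyB : (∫⁻ u in Ioi (0:ℝ), ∫⁻ x, ENNReal.ofReal (F x u)) = ENNReal.ofReal T := by
    rw [← KeyA]
    refine lintegral_congr_ae ?_
    rw [← hμdef]
    refine (ae_restrict_iff' measurableSet_Ioi).mpr (ae_of_all _ fun u hu => ?_)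
    have hu : (0:ℝ) < u := hu
    obtain ⟨hval, hInt⟩ := gauss_moment hν hu lam (g u)
    have hnn : 0 ≤ᵐ[(volume : Measure (EuclideanSpace ℝ (Fin d)))] fun x => F x u :=
      ae_of_all _ fun x => hFnn x u hu
    show (∫⁻ x, ENNReal.ofReal (F x u)) = ENNReal.ofReal (Real.exp (c * u) * g u)
    calc (∫⁻ x, ENNReal.ofReal (F x u))
        = ENNReal.ofReal (∫ x, F x u) := (ofReal_integral_eq_lintegral_ofReal hInt hnn).symm
      _ = ENNReal.ofReal (Real.exp (c * u) * g u) := by rw [hcdef]; exact congrArg _ hval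
  -- Step C : Tonelli
  have hFaem : AEMeasurable (Function.uncurry fun x u => ENNReal.ofReal (F x u))
      ((volume : Measure (EuclideanSpace ℝ (Fin d))).prod μ) := by
    exact (ENNReal.measurable_ofReal.comp hFmeas).aemeasurable
  have KeyC : (∫⁻ x, ∫⁻ u in Ioi (0:ℝ), ENNReal.ofReal (F x u)) = ENNReal.ofReal T := by
    rw [← KeyB]
    exact lintegral_lintegral_swap hFaem
  -- Step D : a.e. finiteness of the inner lintegral
  have hmeasInner : Measurable fun x => ∫⁻ u in Ioi (0:ℝ), ENNReal.ofReal (F x u) := by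
    rw [show (fun x => ∫⁻ u in Ioi (0:ℝ), ENNReal.ofReal (F x u))
        = fun x => ∫⁻ u, (Function.uncurry fun x u => ENNReal.ofReal (F x u)) (x, u) ∂μ from rfl]
    exact Measurable.lintegral_prod_right' (ENNReal.measurable_ofReal.comp hFmeas)
  have hfin : ∀ᵐ x : EuclideanSpace ℝ (Fin d),
      (∫⁻ u in Ioi (0:ℝ), ENNReal.ofReal (F x u)) < ⊤ :=
    ae_lt_top hmeasInner (by rw [KeyC]; exact ENNReal.ofReal_ne_top)
  -- Step E : identification with the outer integrand
  have KeyE : ∀ᵐ x : EuclideanSpace ℝ (Fin d),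
      ENNReal.ofReal (Real.exp (⟪lam, x⟫) * G x)
        = ∫⁻ u in Ioi (0:ℝ), ENNReal.ofReal (F x u) := by
    filter_upwards [hfin] with x hx
    have hmeasu : AEStronglyMeasurable (fun u => F x u) μ :=
      (hFmeas.comp measurable_prodMk_left).aestronglyMeasurable
    have hnn : 0 ≤ᵐ[μ] fun u => F x u := by
      rw [hμdef]
      exact (ae_restrict_iff' measurableSet_Ioi).mpr (ae_of_all _ fun u hu => hFnn x u hu)
    have hInt : Integrable (fun u => F x u) μ :=
      ⟨hmeasu, (hasFiniteIntegral_iff_ofReal hnn).mpr hx⟩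
    have hval : ∫ u, F x u ∂μ = Real.exp (⟪lam, x⟫) * G x := by
      rw [hFdef, hG' x]
      exact integral_const_mul _ _
    rw [← hval]
    exact ofReal_integral_eq_lintegral_ofReal hInt hnn
  -- conclusion
  have hGnn : ∀ x, 0 ≤ Real.exp (⟪lam, x⟫) * G x := by
    intro x
    refine mul_nonneg (Real.exp_nonneg _) ?_
    rw [hG x]
    refine integral_nonneg_of_ae ((ae_restrict_iff' measurableSet_Ioi).mpr
      (ae_of_all _ fun u hu => ?_))
    have hu : (0:ℝ) < u := hu
    have h1 : (0:ℝ) < 4 * π * ν * u := by positivity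
    have h2 := hf u
    positivity
  have hOutMeas : AEStronglyMeasurable (fun x => Real.exp (⟪lam, x⟫) * G x)
      (volume : Measure (EuclideanSpace ℝ (Fin d))) := by
    have : (fun x => Real.exp (⟪lam, x⟫) * G x) = fun x => Real.exp (⟪lam, x⟫) *
        ∫ u in Ioi (0:ℝ),
          (4 * π * ν * u) ^ (-(d : ℝ) / 2) * Real.exp (-‖x‖ ^ 2 / (4 * ν * u)) * g u := by
      funext x; rw [hG' x]
    rw [this]
    refine (hinnercont.measurable.mul ?_).aestronglyMeasurable
    exact (hH0meas.stronglyMeasurable.integral_prod_right').measurable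
  rw [integral_eq_lintegral_of_nonneg_ae (ae_of_all _ hGnn) hOutMeas,
    lintegral_congr_ae KeyE, KeyC, ENNReal.toReal_ofReal hTnn]
  rfl
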